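/- arXiv:1708.01821 — 8 statements merged into one kernel-verified Lean document; each statement's English description precedes it below -/
import Mathlib

section
/- Let G and G' be graphs, let A∈S(G) and A'∈S(G') be real symmetric matrices each with every diagonal entry nonzero. Then A⊗A' belongs to S(G⊠G'), where G⊠G' is the strong product of graphs. -/
open Matrix Kronecker

/-- `S(G)`: real symmetric matrices whose off-diagonal nonzero pattern is the edge set of `G`. -/
def inS {V : Type*} (G : SimpleGraph V) (A : Matrix V V ℝ) : Prop :=
  A.IsSymm ∧ ∀ i j, i ≠ j → (A i j ≠ 0 ↔ G.Adj i j)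

/-- The strong product of two simple graphs. -/
def strongProd {V W : Type*} (G : SimpleGraph V) (G' : SimpleGraph W) :
    SimpleGraph (V × W) where
  Adj p q := (p.1 = q.1 ∧ G'.Adj p.2 q.2) ∨ (p.2 = q.2 ∧ G.Adj p.1 q.1) ∨
      (G.Adj p.1 q.1 ∧ G'.Adj p.2 q.2)
  symm := by
    constructor
    rintro p q (⟨h1, h2⟩ | ⟨h1, h2⟩ | ⟨h1, h2⟩)
    · exact Or.inl ⟨h1.symm, h2.symm⟩
    · exact Or.inr (Or.inl ⟨h1.symm, h2.symm⟩)
    · exact Or.inr (Or.inr ⟨h1.symm, h2.symm⟩)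
  loopless := by
    constructor
    rintro p (⟨-, h⟩ | ⟨-, h⟩ | ⟨h, -⟩)
    · exact G'.irrefl h
    · exact G.irrefl h
    · exact G.irrefl h

/-! Strong product is easiest to use through the reflexive closures of the factors: two distinct
vertices are adjacent iff each coordinate pair is equal or adjacent. With a nonzero diagonal, the
support of a matrix in `S(G)` is exactly the reflexive closure of `G`, and the support of a
Kronecker product is the product of the supports. -/

theorem Matrix.IsSymm.kroneckerMap {l m α β γ : Type*} (f : α → β → γ)
    {A : Matrix l l α} {B : Matrix m m β} (hA : A.IsSymm) (hB : B.IsSymm) :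
    (kroneckerMap f A B).IsSymm := by
  rw [IsSymm, ← kroneckerMap_transpose, hA.eq, hB.eq]

theorem strongProd_adj_iff {V W : Type*} {G : SimpleGraph V} {G' : SimpleGraph W}
    {p q : V × W} (hpq : p ≠ q) :
    (strongProd G G').Adj p q ↔
      (p.1 = q.1 ∨ G.Adj p.1 q.1) ∧ (p.2 = q.2 ∨ G'.Adj p.2 q.2) := by
  obtain ⟨i, i'⟩ := p
  obtain ⟨j, j'⟩ := q
  simp only [strongProd, ne_eq, Prod.mk.injEq] at hpq ⊢
  tauto

theorem inS.apply_ne_zero_iff {V : Type*} {G : SimpleGraph V} {A : Matrix V V ℝ} (hA : inS G A)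
    (hdiag : ∀ i, A i i ≠ 0) (i j : V) : A i j ≠ 0 ↔ i = j ∨ G.Adj i j := by
  by_cases hij : i = j
  · subst hij
    simpa using hdiag i
  · simp [hA.2 i j hij, hij]

theorem stmt3 {n n' : ℕ} (G : SimpleGraph (Fin n)) (G' : SimpleGraph (Fin n'))
    (A : Matrix (Fin n) (Fin n) ℝ) (A' : Matrix (Fin n') (Fin n') ℝ)
    (hA : inS G A) (hA' : inS G' A')
    (hdiag : ∀ i, A i i ≠ 0) (hdiag' : ∀ i, A' i i ≠ 0) :
    inS (strongProd G G') (A ⊗ₖ A') := by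
  refine ⟨hA.1.kroneckerMap _ hA'.1, fun p q hpq => ?_⟩
  rw [strongProd_adj_iff hpq, ← hA.apply_ne_zero_iff hdiag, ← hA'.apply_ne_zero_iff hdiag',
    kroneckerMap_apply, mul_ne_zero_iff]
end

section
/- Let A be an n×n real symmetric matrix with -dev(A)=dev(A), i.e., the set of distinct eigenvalues of A is symmetric about 0, and suppose 0 is not an eigenvalue of A. Let M be the 4n×4n block matrix [[A,I,0,-I],[I,-A,I,0],[0,I,A,I],[-I,0,I,-A]]. Then M² is block diagonal with each diagonal block equal to A²+2I, and the number of distinct eigenvalues of M is at most the number of distinct eigenvalues of A. -/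
/-!
Since `B² = 2`, `D² = 1` and `BD = -DB`, squaring `M = B ⊗ I + D ⊗ A` kills the cross terms and
gives `M² = I ⊗ (A² + 2I)`. Hence every eigenvalue `μ` of `M` satisfies `μ² = λ² + 2` for an
eigenvalue `λ` of the symmetric matrix `A`. As `λ ≠ 0` and `-λ` is an eigenvalue too, `μ` is
`φ λ` or `φ (-λ)` for `φ x = sign x · √(x² + 2)`, so the spectrum of `M` lies in the image of the
spectrum of `A` under `φ`.
-/

open Matrix Kronecker

theorem Set.ncard_le_of_forall_sq_eq_sq_add {S T : Set ℝ} (hS : S.Finite) (hneg : -S = S)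
    (h0 : (0 : ℝ) ∉ S) (c : ℝ) (hT : ∀ μ ∈ T, ∃ l ∈ S, μ ^ 2 = l ^ 2 + c) :
    T.ncard ≤ S.ncard := by
  set φ : ℝ → ℝ := fun x => Real.sign x * √(x ^ 2 + c)
  have hsub : T ⊆ φ '' S := by
    intro μ hμ
    obtain ⟨l, hl, hμl⟩ := hT μ hμ
    have hl0 : l ≠ 0 := fun h => h0 (h ▸ hl)
    have hsqrt : √(l ^ 2 + c) = |μ| := by rw [← hμl, Real.sqrt_sq_eq_abs]
    have hφ : μ = φ l ∨ μ = φ (-l) := by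
      simp only [φ, neg_sq, hsqrt, Real.sign_neg]
      rcases Real.sign_apply_eq_of_ne_zero l hl0 with h | h <;>
        rcases abs_choice μ with h' | h' <;> simp [h, h']
    rcases hφ with h | h
    · exact ⟨l, hl, h.symm⟩
    · exact ⟨-l, by rwa [← hneg, Set.neg_mem_neg], h.symm⟩
  calc T.ncard ≤ (φ '' S).ncard := Set.ncard_le_ncard hsub (hS.image φ)
    _ ≤ S.ncard := Set.ncard_image_le hS

namespace Matrix

variable {ι m R : Type*} [Fintype ι] [Fintype m] [DecidableEq ι] [DecidableEq m]

theorem kronecker_one_add_kronecker_mul_self [CommRing R] {B D : Matrix ι ι R}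
    (A : Matrix m m R) {c : R} (hB : B * B = c • 1) (hD : D * D = 1) (hBD : B * D + D * B = 0) :
    (B ⊗ₖ 1 + D ⊗ₖ A) * (B ⊗ₖ 1 + D ⊗ₖ A) = (1 : Matrix ι ι R) ⊗ₖ (A * A + c • 1) := by
  have hcross : (B ⊗ₖ 1) * (D ⊗ₖ A) + (D ⊗ₖ A) * (B ⊗ₖ 1) = 0 := by
    rw [← mul_kronecker_mul, ← mul_kronecker_mul, Matrix.one_mul, Matrix.mul_one,
      ← add_kronecker, hBD, zero_kronecker]
  calc (B ⊗ₖ 1 + D ⊗ₖ A) * (B ⊗ₖ 1 + D ⊗ₖ A)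
      = (B * B) ⊗ₖ (1 * 1 : Matrix m m R) + (D * D) ⊗ₖ (A * A)
          + ((B ⊗ₖ 1) * (D ⊗ₖ A) + (D ⊗ₖ A) * (B ⊗ₖ 1)) := by
        rw [mul_kronecker_mul, mul_kronecker_mul]; noncomm_ring
    _ = (1 : Matrix ι ι R) ⊗ₖ (A * A + c • 1) := by
        rw [hcross, hB, hD, Matrix.one_mul, smul_kronecker, one_kronecker_one, kronecker_add,
          kronecker_smul, one_kronecker_one, add_zero, add_comm]

theorem spectrum_one_kronecker [Nonempty ι] [Field R] (C : Matrix m m R) :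
    spectrum R ((1 : Matrix ι ι R) ⊗ₖ C) = spectrum R C := by
  ext μ
  have hshift : algebraMap R _ μ - (1 : Matrix ι ι R) ⊗ₖ C
      = (1 : Matrix ι ι R) ⊗ₖ (algebraMap R _ μ - C) := by
    ext ⟨i, k⟩ ⟨j, l⟩
    simp only [algebraMap_eq_diagonal, sub_apply, kroneckerMap_apply, diagonal_apply, one_apply,
      Prod.mk.injEq, Pi.algebraMap_apply, Algebra.algebraMap_self, RingHom.id_apply]
    split_ifs <;> simp_all
  simp only [spectrum.mem_iff, hshift, isUnit_iff_isUnit_det, det_kronecker, det_one, one_pow,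
    one_mul, isUnit_pow_iff Fintype.card_ne_zero]

theorem IsSymm.spectrum_mul_self_add_smul_one {A : Matrix m m ℝ} (hA : A.IsSymm) (c : ℝ) :
    spectrum ℝ (A * A + c • 1) = (fun x => x ^ 2 + c) '' spectrum ℝ A := by
  have hsa : IsSelfAdjoint A := isHermitian_iff_isSymm.mpr hA
  rw [← cfc_map_spectrum (fun x : ℝ => x ^ 2 + c) A, cfc_add_const c (fun x => x ^ 2) A,
    cfc_pow (fun x => x) 2 A, cfc_id' ℝ A, sq, Algebra.algebraMap_eq_smul_one]

end Matrix

theorem stmt4 {n : ℕ} (A : Matrix (Fin n) (Fin n) ℝ) (hA : A.IsSymm)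
    (hsym : -(spectrum ℝ A) = spectrum ℝ A) (h0 : (0 : ℝ) ∉ spectrum ℝ A)
    (B : Matrix (Fin 4) (Fin 4) ℝ) (hB : B = !![0,1,0,-1; 1,0,1,0; 0,1,0,1; -1,0,1,0])
    (D : Matrix (Fin 4) (Fin 4) ℝ) (hD : D = Matrix.diagonal ![1,-1,1,-1])
    (M : Matrix (Fin 4 × Fin n) (Fin 4 × Fin n) ℝ)
    (hM : M = B ⊗ₖ (1 : Matrix (Fin n) (Fin n) ℝ) + D ⊗ₖ A) :
    M * M = (1 : Matrix (Fin 4) (Fin 4) ℝ) ⊗ₖ (A * A + 2 • (1 : Matrix (Fin n) (Fin n) ℝ)) ∧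
      (spectrum ℝ M).ncard ≤ (spectrum ℝ A).ncard := by
  have hBB : B * B = (2 : ℝ) • 1 := by
    subst hB
    ext i j; fin_cases i <;> fin_cases j <;>
      simp [mul_apply, Fin.sum_univ_succ, one_apply] <;> norm_num
  have hDD : D * D = 1 := by
    rw [hD, diagonal_mul_diagonal, ← diagonal_one]
    congr 1; ext i; fin_cases i <;> simp
  have hBD : B * D + D * B = 0 := by
    subst hB hD
    ext i j; rw [Matrix.add_apply, mul_diagonal, diagonal_mul]
    fin_cases i <;> fin_cases j <;> simp
  have hMM : M * M = (1 : Matrix (Fin 4) (Fin 4) ℝ) ⊗ₖ (A * A + (2 : ℝ) • 1) := by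
    rw [hM]; exact kronecker_one_add_kronecker_mul_self A hBB hDD hBD
  have hspec : ∀ μ ∈ spectrum ℝ M, ∃ l ∈ spectrum ℝ A, μ ^ 2 = l ^ 2 + 2 := by
    intro μ hμ
    have hμ2 := spectrum.pow_mem_pow M 2 hμ
    rw [sq M, hMM, spectrum_one_kronecker, hA.spectrum_mul_self_add_smul_one] at hμ2
    obtain ⟨l, hl, hμl⟩ := hμ2
    exact ⟨l, hl, hμl.symm⟩
  exact ⟨by rwa [ofNat_smul_eq_nsmul] at hMM,
    Set.ncard_le_of_forall_sq_eq_sq_add (finite_spectrum A) hsym h0 2 hspec⟩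
end

section
/- Let A be a real symmetric n×n matrix with zero diagonal such that dev(A) = -dev(A). Let B be the 4×4 matrix with rows (0,1,0,-1),(1,0,1,0),(0,1,0,1),(-1,0,1,0). Then (1/√2)·(B⊗A) squared equals the block diagonal matrix with four copies of A², and consequently every eigenvalue of (1/√2)(B⊗A) lies in dev(A)∪(−dev(A)) = dev(A), so (1/√2)(B⊗A) has at most as many distinct eigenvalues as A. -/
/-!
Since `B * B = 2 • 1`, the square of `M` is `1 ⊗ₖ (A * A)`, the image of `A * A` under an
algebra map. If `μ ∈ σ M` then `μ² ∈ σ (M * M) ⊆ σ (A * A)`, and the factorisation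
`μ² - A² = (μ - A)(μ + A)` into commuting factors gives `μ ∈ σ A` or `-μ ∈ σ A`; the symmetry
of `σ A` turns either case into `μ ∈ σ A`.
-/

open Matrix Kronecker

namespace Matrix

variable {R : Type*} [CommSemiring R]

noncomputable def oneKroneckerAlgHom (l : Type*) {n : Type*} [Fintype l] [DecidableEq l]
    [Fintype n] [DecidableEq n] : Matrix n n R →ₐ[R] Matrix (l × n) (l × n) R where
  toFun C := (1 : Matrix l l R) ⊗ₖ C
  map_one' := one_kronecker_one
  map_mul' C D := by rw [← mul_kronecker_mul, one_mul]
  map_zero' := kronecker_zero _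
  map_add' := kronecker_add _
  commutes' r := by
    simp only [Algebra.algebraMap_eq_smul_one, kronecker_smul, one_kronecker_one]

theorem kronecker_mul_self_of_mul_self_eq_smul_one {m n : Type*} [Fintype m] [DecidableEq m]
    [Fintype n] {B : Matrix m m R} {c : R} (hB : B * B = c • 1) (A : Matrix n n R) :
    (B ⊗ₖ A) * (B ⊗ₖ A) = c • ((1 : Matrix m m R) ⊗ₖ (A * A)) := by
  rw [← mul_kronecker_mul, hB, smul_kronecker]

end Matrix

namespace spectrum

variable {R A : Type*} [CommRing R] [Ring A] [Algebra R A]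

theorem sq_mem_mul_self_iff (a : A) (μ : R) :
    μ ^ 2 ∈ spectrum R (a * a) ↔ μ ∈ spectrum R a ∨ μ ∈ spectrum R (-a) := by
  have hμa := Algebra.commute_algebraMap_left μ a
  have hfac : algebraMap R A (μ ^ 2) - a * a
      = (algebraMap R A μ - a) * (algebraMap R A μ - -a) := by
    rw [pow_two, map_mul, sub_neg_eq_add, sub_mul, mul_add, mul_add, hμa.eq]
    abel
  have hcomm : Commute (algebraMap R A μ - a) (algebraMap R A μ - -a) :=
    ((Commute.refl _).sub_right hμa.neg_right).sub_left
      (hμa.symm.sub_right (Commute.refl a).neg_right)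
  simp only [mem_iff, hfac, hcomm.isUnit_mul_iff, not_and_or]

theorem subset_of_mul_self_eq_map {B : Type*} [Ring B] [Algebra R B] (φ : A →ₐ[R] B) {a : A}
    {m : B} (hm : m * m = φ (a * a)) (ha : -spectrum R a = spectrum R a) :
    spectrum R m ⊆ spectrum R a := by
  intro μ hμ
  have hsq : μ ^ 2 ∈ spectrum R (a * a) :=
    AlgHom.spectrum_apply_subset φ _ <| hm ▸ (sq_mem_mul_self_iff m μ).2 (.inl hμ)
  rwa [sq_mem_mul_self_iff, ← neg_eq, ha, or_self] at hsq

end spectrum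

theorem stmt5_general {n : ℕ} (A : Matrix (Fin n) (Fin n) ℝ)
    (hdev : -(spectrum ℝ A) = spectrum ℝ A)
    (B : Matrix (Fin 4) (Fin 4) ℝ) (hB : B = !![0,1,0,-1; 1,0,1,0; 0,1,0,1; -1,0,1,0])
    (M : Matrix (Fin 4 × Fin n) (Fin 4 × Fin n) ℝ)
    (hM : M = (Real.sqrt 2)⁻¹ • (B ⊗ₖ A)) :
    M * M = (1 : Matrix (Fin 4) (Fin 4) ℝ) ⊗ₖ (A * A) ∧
      spectrum ℝ M ⊆ spectrum ℝ A ∧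
      (spectrum ℝ M).ncard ≤ (spectrum ℝ A).ncard := by
  have hBB : B * B = (2 : ℝ) • 1 := by
    subst hB
    ext i j
    fin_cases i <;> fin_cases j <;> simp [mul_apply, Fin.sum_univ_four, one_apply] <;> norm_num
  have hMM : M * M = (1 : Matrix (Fin 4) (Fin 4) ℝ) ⊗ₖ (A * A) := by
    rw [hM, smul_mul_smul_comm, kronecker_mul_self_of_mul_self_eq_smul_one hBB, smul_smul,
      ← mul_inv, Real.mul_self_sqrt zero_le_two, inv_mul_cancel₀ two_ne_zero, one_smul]
  have hsub : spectrum ℝ M ⊆ spectrum ℝ A :=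
    spectrum.subset_of_mul_self_eq_map (oneKroneckerAlgHom (Fin 4)) hMM hdev
  exact ⟨hMM, hsub, Set.ncard_le_ncard hsub A.finite_spectrum⟩

theorem stmt5 {n : ℕ} (A : Matrix (Fin n) (Fin n) ℝ) (hA : A.IsSymm)
    (hdiag : ∀ i, A i i = 0) (hdev : -(spectrum ℝ A) = spectrum ℝ A)
    (B : Matrix (Fin 4) (Fin 4) ℝ) (hB : B = !![0,1,0,-1; 1,0,1,0; 0,1,0,1; -1,0,1,0])
    (M : Matrix (Fin 4 × Fin n) (Fin 4 × Fin n) ℝ)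
    (hM : M = (Real.sqrt 2)⁻¹ • (B ⊗ₖ A)) :
    M * M = (1 : Matrix (Fin 4) (Fin 4) ℝ) ⊗ₖ (A * A) ∧
      spectrum ℝ M ⊆ spectrum ℝ A ∧
      (spectrum ℝ M).ncard ≤ (spectrum ℝ A).ncard :=
  stmt5_general A hdev B hB M hM
end

section
/- The matrix A whose only nonzero off-diagonal entries are ones connecting consecutive blocks as in a clique-path, namely the block tridiagonal matrix built from J_{n₁−1}, scalars 2 at summing vertices, J_{n_i−2} blocks and all-ones coupling vectors (as in the clique-path construction), is a real symmetric matrix in S(KP(n₁,…,n_s)) of rank s; consequently q(KP(n₁,…,n_s)) ≤ s+1. -/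
open Matrix

/-- `q(G)`: the minimum number of distinct eigenvalues among matrices in `S(G)`. -/
noncomputable def qGraph {V : Type*} [Fintype V] [DecidableEq V] (G : SimpleGraph V) : ℕ :=
  sInf {k : ℕ | ∃ A : Matrix V V ℝ, inS G A ∧ (spectrum ℝ A).ncard = k}

/-- The graph whose edges are pairs of distinct vertices lying in a common clique `K i`. -/
def cliqueUnionGraph {V : Type*} (s : ℕ) (K : Fin s → Finset V) : SimpleGraph V where
  Adj u v := u ≠ v ∧ ∃ i, u ∈ K i ∧ v ∈ K i
  symm := ⟨by rintro u v ⟨h, i, hu, hv⟩; exact ⟨h.symm, i, hv, hu⟩⟩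
  loopless := ⟨fun u h => h.1 rfl⟩

/-- The matrix `A = Σᵢ 𝟙_{K i} 𝟙_{K i}ᵀ` used for clique-paths: its `(u,v)` entry is the
number of cliques containing both `u` and `v`.  For a clique-path this is `J_{n₁-1}` etc.
block tridiagonal with `2`'s at the (distinct) summing vertices and all-ones couplings. -/
noncomputable def cliquePathMatrix {V : Type*} [DecidableEq V] (s : ℕ) (K : Fin s → Finset V) :
    Matrix V V ℝ :=
  fun u v => ((Finset.univ.filter (fun i : Fin s => u ∈ K i ∧ v ∈ K i)).card : ℝ)

/-!
The matrix is `Mᵀ M` for the clique–vertex incidence matrix `M`, so it is symmetric, its `(u, v)`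
entry is nonzero exactly when `u` and `v` share a clique, and its rank is that of `M`. Each clique
`K i` has a vertex outside every later clique (it meets `K (i+1)` in a single vertex and the
cliques after that not at all), so the rows of `M` are triangular, hence independent, and the rank
is `s`. Finally, eigenvectors for distinct nonzero eigenvalues are independent vectors in the
range, so a matrix of rank `r` has at most `r + 1` distinct eigenvalues.
-/

namespace Module.End

variable {K W : Type*} [Field K] [AddCommGroup W] [Module K W] [FiniteDimensional K W]

theorem ncard_spectrum_sdiff_zero_le_finrank_range (f : End K W) :
    (spectrum K f \ {0}).ncard ≤ finrank K (LinearMap.range f) := by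
  set μs := spectrum K f \ {0}
  have : Fintype μs := (finite_spectrum f).sdiff.fintype
  have hev (μ : μs) : f.HasEigenvalue μ := hasEigenvalue_iff_mem_spectrum.mpr μ.2.1
  choose xs hxs using fun μ => (hev μ).exists_hasEigenvector
  have hrange (μ : μs) : xs μ ∈ LinearMap.range f := by
    have hμ : (μ : K) ≠ 0 := μ.2.2
    refine ⟨(μ : K)⁻¹ • xs μ, ?_⟩
    rw [map_smul, (hxs μ).apply_eq_smul, smul_smul, inv_mul_cancel₀ hμ, one_smul]
  have hli : LinearIndependent K (fun μ => (⟨xs μ, hrange μ⟩ : LinearMap.range f)) :=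
    .of_comp (LinearMap.range f).subtype (f.eigenvectors_linearIndependent μs xs hxs)
  rw [← Nat.card_coe_set_eq, Nat.card_eq_fintype_card]
  exact hli.fintype_card_le_finrank

theorem ncard_spectrum_le_finrank_range_add_one (f : End K W) :
    (spectrum K f).ncard ≤ finrank K (LinearMap.range f) + 1 := by
  have := Set.pred_ncard_le_ncard_sdiff_singleton (spectrum K f) 0
  have := f.ncard_spectrum_sdiff_zero_le_finrank_range
  omega

end Module.End

theorem Matrix.ncard_spectrum_le_rank_add_one {n K : Type*} [Fintype n] [DecidableEq n] [Field K]
    (A : Matrix n n K) : (spectrum K A).ncard ≤ A.rank + 1 :=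
  spectrum_toLin' A ▸ Module.End.ncard_spectrum_le_finrank_range_add_one A.toLin'

theorem qGraph_le_rank_add_one {V : Type*} [Fintype V] [DecidableEq V] {G : SimpleGraph V}
    {A : Matrix V V ℝ} (hA : inS G A) : qGraph G ≤ A.rank + 1 :=
  calc qGraph G ≤ (spectrum ℝ A).ncard := Nat.sInf_le ⟨A, hA, rfl⟩
    _ ≤ A.rank + 1 := A.ncard_spectrum_le_rank_add_one

def incidenceMatrix {ι V : Type*} (R : Type*) [DecidableEq V] [Zero R] [One R] (K : ι → Finset V) :
    Matrix ι V R :=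
  Matrix.of fun i x => if x ∈ K i then 1 else 0

theorem linearIndependent_incidenceMatrix_row {ι V R : Type*} [Fintype ι] [LinearOrder ι]
    [DecidableEq V] [Ring R] (K : ι → Finset V) (hK : ∀ i, ∃ x ∈ K i, ∀ j, i < j → x ∉ K j) :
    LinearIndependent R (incidenceMatrix R K).row := by
  rw [Fintype.linearIndependent_iff]
  intro g hg i
  induction i using WellFoundedLT.induction with
  | _ i IH =>
  obtain ⟨x, hxi, hx⟩ := hK i
  have hsum := congrFun hg x
  simp only [Finset.sum_apply, Pi.smul_apply, smul_eq_mul, Pi.zero_apply] at hsum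
  rw [Finset.sum_eq_single i] at hsum
  · simpa [incidenceMatrix, Matrix.row, hxi] using hsum
  · intro j _ hji
    rcases hji.lt_or_gt with h | h
    · simp [IH j h]
    · simp [incidenceMatrix, Matrix.row, hx j h]
  · simp

section CliquePath

variable {V : Type*} [DecidableEq V] {s : ℕ} {K : Fin s → Finset V}

theorem cliquePathMatrix_eq_transpose_mul_self [Fintype V] :
    cliquePathMatrix s K = (incidenceMatrix ℝ K)ᵀ * incidenceMatrix ℝ K := by
  ext u v
  rw [Matrix.mul_apply]
  simp [cliquePathMatrix, incidenceMatrix, ← ite_and, Finset.sum_boole, and_comm]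

theorem cliquePathMatrix_isSymm : (cliquePathMatrix s K).IsSymm := by
  ext u v
  simp only [Matrix.transpose_apply, cliquePathMatrix, and_comm]

theorem cliquePathMatrix_ne_zero_iff {u v : V} :
    cliquePathMatrix s K u v ≠ 0 ↔ ∃ i, u ∈ K i ∧ v ∈ K i := by
  simp [cliquePathMatrix]

theorem inS_cliquePathMatrix :
    inS (cliqueUnionGraph s K) (cliquePathMatrix s K) :=
  ⟨cliquePathMatrix_isSymm, fun _ _ huv =>
    cliquePathMatrix_ne_zero_iff.trans ⟨fun h => ⟨huv, h⟩, And.right⟩⟩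

variable (hcard : ∀ i, 2 ≤ (K i).card)
    (hconsec : ∀ i j : Fin s, (i : ℕ) + 1 = (j : ℕ) → (K i ∩ K j).card = 1)
    (hdisj : ∀ i j : Fin s, (i : ℕ) + 1 < (j : ℕ) → K i ∩ K j = ∅)
include hcard hconsec hdisj

theorem exists_mem_forall_lt_notMem (i : Fin s) : ∃ x ∈ K i, ∀ j, i < j → x ∉ K j := by
  suffices ∃ x ∈ K i, ∀ j : Fin s, (i : ℕ) + 1 = j → x ∉ K j by
    obtain ⟨x, hx, hnext⟩ := this
    refine ⟨x, hx, fun j hij hxj => ?_⟩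
    rcases (Nat.succ_le_of_lt hij).eq_or_lt with h | h
    · exact hnext j h hxj
    · simpa [hdisj i j h] using Finset.mem_inter.mpr ⟨hx, hxj⟩
  by_cases hlast : ∃ j : Fin s, (i : ℕ) + 1 = j
  · obtain ⟨j, hij⟩ := hlast
    have hlt : (K i ∩ K j).card < (K i).card := by
      have := hcard i
      rw [hconsec i j hij]
      omega
    obtain ⟨x, hx, hxij⟩ := Finset.exists_mem_notMem_of_card_lt_card hlt
    refine ⟨x, hx, fun j' hij' hxj => hxij (Finset.mem_inter.mpr ⟨hx, ?_⟩)⟩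
    rwa [← Fin.ext (hij'.symm.trans hij)]
  · obtain ⟨x, hx⟩ : (K i).Nonempty := Finset.card_pos.mp (by have := hcard i; omega)
    exact ⟨x, hx, fun j hij => (hlast ⟨j, hij⟩).elim⟩

theorem rank_cliquePathMatrix [Fintype V] : (cliquePathMatrix s K).rank = s := by
  rw [cliquePathMatrix_eq_transpose_mul_self, Matrix.rank_transpose_mul_self,
    (linearIndependent_incidenceMatrix_row K
      (exists_mem_forall_lt_notMem hcard hconsec hdisj)).rank_matrix, Fintype.card_fin]

end CliquePath

theorem stmt10_general {V : Type*} [Fintype V] [DecidableEq V] (s : ℕ)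
    (K : Fin s → Finset V)
    (hcard : ∀ i, 2 ≤ (K i).card)
    (hconsec : ∀ i j : Fin s, (i : ℕ) + 1 = (j : ℕ) → (K i ∩ K j).card = 1)
    (hdisj : ∀ i j : Fin s, (i : ℕ) + 1 < (j : ℕ) → K i ∩ K j = ∅) :
    inS (cliqueUnionGraph s K) (cliquePathMatrix s K) ∧
      (cliquePathMatrix s K).rank = s ∧
      qGraph (cliqueUnionGraph s K) ≤ s + 1 := by
  have hS : inS (cliqueUnionGraph s K) (cliquePathMatrix s K) := inS_cliquePathMatrix
  have hrank := rank_cliquePathMatrix hcard hconsec hdisj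
  refine ⟨hS, hrank, ?_⟩
  simpa only [hrank] using qGraph_le_rank_add_one hS

theorem stmt10 {V : Type*} [Fintype V] [DecidableEq V] (s : ℕ) (hs : 2 ≤ s)
    (K : Fin s → Finset V)
    (hcard : ∀ i, 2 ≤ (K i).card)
    (hcover : ∀ x : V, ∃ i, x ∈ K i)
    (hconsec : ∀ i j : Fin s, (i : ℕ) + 1 = (j : ℕ) → (K i ∩ K j).card = 1)
    (hdisj : ∀ i j : Fin s, (i : ℕ) + 1 < (j : ℕ) → K i ∩ K j = ∅) :
    inS (cliqueUnionGraph s K) (cliquePathMatrix s K) ∧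
      (cliquePathMatrix s K).rank = s ∧
      qGraph (cliqueUnionGraph s K) ≤ s + 1 :=
  stmt10_general s K hcard hconsec hdisj
end

section
/- Let s≥2 and n₁,…,n_s≥2, let ℓ_i=n_i−1, n=1+Σℓ_i, and let A be the n×n symmetric matrix with diagonal blocks (1/ℓ_i)J_{ℓ_i} for i=1,…,s, last row/column entries (1/ℓ_i) on the positions of block i, and last diagonal entry Σ_{i=1}^s 1/ℓ_i. Then A ∈ S(KS(n₁,…,n_s)), rank(A)=s, A has eigenvalue 1 with multiplicity at least s−1, and A has exactly 3 distinct eigenvalues. Consequently q(KS(n₁,…,n_s))=3, using that q≥3 from the unique shortest path of length two through the center. -/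
/-! With `X` the vertex–clique incidence matrix and `ℓᵢ = |Kᵢ| - 1`, the matrix is
`A = X diag(ℓ)⁻¹ Xᵀ`, and because the cliques meet only in the center, `XᵀX = diag ℓ + J`.
Writing `w = X ℓ⁻¹`, this gives `A (X y) = X y + (Σ yᵢ) w` and `A² = A + w wᵀ`. Hence every
eigenvalue `r` satisfies `r (r - 1) (r - μ) = 0` with `μ = 1 + Σ 1/ℓᵢ`, and all three values
occur; `X` maps the hyperplane `Σ yᵢ = 0` injectively into the `1`-eigenspace; and `rank A = s`
because `Xᵀ A X = (XᵀX) diag(ℓ)⁻¹ (XᵀX)` is invertible. -/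

open Matrix

/-- The matrix with diagonal blocks `(1/ℓᵢ) J_{ℓᵢ}`, entries `1/ℓᵢ` between the center and the
noncentral vertices of the `i`-th clique, and `Σᵢ 1/ℓᵢ` at the center (where `ℓᵢ = n_i - 1`):
its `(u,v)` entry is `Σ_{i : u,v ∈ K i} 1/((K i).card - 1)`. -/
noncomputable def cliqueStarMatrix {V : Type*} [DecidableEq V] (s : ℕ) (K : Fin s → Finset V) :
    Matrix V V ℝ :=
  fun u v => ∑ i : Fin s, if u ∈ K i ∧ v ∈ K i then (((K i).card : ℝ) - 1)⁻¹ else 0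

namespace Matrix

section Spectrum

variable {n R : Type*} [Fintype n] [DecidableEq n] [Field R]

theorem mem_spectrum_iff_exists_mulVec_eq_smul {A : Matrix n n R} {r : R} :
    r ∈ spectrum R A ↔ ∃ v ≠ 0, A *ᵥ v = r • v := by
  rw [← spectrum_toLin', ← Module.End.hasEigenvalue_iff_mem_spectrum]
  constructor
  · intro h
    obtain ⟨v, hv⟩ := h.exists_hasEigenvector
    exact ⟨v, hv.2, by simpa using hv.apply_eq_smul⟩
  · rintro ⟨v, hv, h⟩
    exact Module.End.hasEigenvalue_of_hasEigenvector ⟨by simpa [Module.End.mem_eigenspace_iff], hv⟩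

end Spectrum

section GramFactorization

variable {m n : Type*} [Fintype m] [Fintype n] {X : Matrix m n ℝ} {ℓ : n → ℝ}

theorem eq_zero_of_mul_add_sum_eq_zero (hℓ : ∀ i, 0 < ℓ i) {y : n → ℝ}
    (hy : (ℓ * y + fun _ => ∑ j, y j) = 0) : y = 0 := by
  set S := ∑ j, y j
  have hyi : ∀ i, y i = -S * (ℓ i)⁻¹ := fun i => by
    have := congrFun hy i
    simp only [Pi.add_apply, Pi.mul_apply, Pi.zero_apply] at this
    field_simp [(hℓ i).ne']
    linarith
  have hS : S * (1 + ∑ i, (ℓ i)⁻¹) = 0 := by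
    have : S = ∑ i, -S * (ℓ i)⁻¹ := Finset.sum_congr rfl fun i _ => hyi i
    rw [← Finset.mul_sum] at this
    linarith
  have hμ : 0 < 1 + ∑ i, (ℓ i)⁻¹ := by
    have := Finset.sum_nonneg fun i (_ : i ∈ Finset.univ) => (inv_pos.2 (hℓ i)).le
    linarith
  have hS0 : S = 0 := (mul_eq_zero.1 hS).resolve_right hμ.ne'
  ext i
  simp [hyi i, hS0]

variable [DecidableEq n]

theorem transpose_mulVec_mulVec_of_gram (hX : Xᵀ * X = diagonal ℓ + of fun _ _ => 1)
    (y : n → ℝ) : Xᵀ *ᵥ (X *ᵥ y) = ℓ * y + fun _ => ∑ j, y j := by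
  rw [mulVec_mulVec, hX, add_mulVec]
  ext i
  simp only [Pi.add_apply, mulVec_diagonal, Pi.mul_apply]
  simp [mulVec, dotProduct]

theorem mul_diagonal_mul_transpose_mulVec_single [DecidableEq m] {d : n → ℝ} {c : m}
    (hc : ∀ i, X c i = 1) :
    (X * diagonal d * Xᵀ) *ᵥ Pi.single c 1 = X *ᵥ d := by
  have hXc : Xᵀ *ᵥ Pi.single c 1 = 1 := by
    ext i
    simp [mulVec, dotProduct, Pi.single_apply, hc]
  rw [← mulVec_mulVec, ← mulVec_mulVec, hXc]
  congr 1
  ext i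
  simp [mulVec_diagonal]

variable (hℓ : ∀ i, 0 < ℓ i) (hX : Xᵀ * X = diagonal ℓ + of fun _ _ => 1)
include hℓ hX

theorem mulVec_injective_transpose_mul_self_of_gram : Function.Injective (Xᵀ * X).mulVec := by
  intro y z h
  rw [← sub_eq_zero]
  apply eq_zero_of_mul_add_sum_eq_zero hℓ
  rw [← transpose_mulVec_mulVec_of_gram hX, mulVec_mulVec, mulVec_sub, h, sub_self]

theorem mulVec_injective_of_gram : Function.Injective X.mulVec := fun y z h =>
  mulVec_injective_transpose_mul_self_of_gram hℓ hX <| by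
    rw [← mulVec_mulVec, ← mulVec_mulVec, h]

theorem mulVec_mulVec_of_gram (y : n → ℝ) :
    (X * diagonal ℓ⁻¹ * Xᵀ) *ᵥ (X *ᵥ y) = X *ᵥ y + (∑ i, y i) • (X *ᵥ ℓ⁻¹) := by
  have hdiag : diagonal ℓ⁻¹ *ᵥ (ℓ * y + fun _ => ∑ j, y j) = y + (∑ i, y i) • ℓ⁻¹ := by
    ext i
    simp only [mulVec_diagonal, Pi.add_apply, Pi.mul_apply, Pi.inv_apply, Pi.smul_apply,
      smul_eq_mul]
    field_simp [(hℓ i).ne']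
  rw [← mulVec_mulVec, ← mulVec_mulVec, transpose_mulVec_mulVec_of_gram hX, hdiag, mulVec_add,
    mulVec_smul]

theorem mulVec_weight_of_gram :
    (X * diagonal ℓ⁻¹ * Xᵀ) *ᵥ (X *ᵥ ℓ⁻¹) = (1 + ∑ i, (ℓ i)⁻¹) • (X *ᵥ ℓ⁻¹) := by
  rw [mulVec_mulVec_of_gram hℓ hX, add_smul, one_smul]
  rfl

theorem mulVec_mulVec_self_of_gram (v : m → ℝ) :
    (X * diagonal ℓ⁻¹ * Xᵀ) *ᵥ ((X * diagonal ℓ⁻¹ * Xᵀ) *ᵥ v)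
      = (X * diagonal ℓ⁻¹ * Xᵀ) *ᵥ v + ((X *ᵥ ℓ⁻¹) ⬝ᵥ v) • (X *ᵥ ℓ⁻¹) := by
  have hAv : (X * diagonal ℓ⁻¹ * Xᵀ) *ᵥ v = X *ᵥ (diagonal ℓ⁻¹ *ᵥ (Xᵀ *ᵥ v)) := by
    rw [← mulVec_mulVec, ← mulVec_mulVec]
  rw [hAv, mulVec_mulVec_of_gram hℓ hX]
  congr 2
  calc ∑ i, (diagonal ℓ⁻¹ *ᵥ (Xᵀ *ᵥ v)) i = ℓ⁻¹ ⬝ᵥ (Xᵀ *ᵥ v) := by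
        simp [mulVec_diagonal, dotProduct]
    _ = (X *ᵥ ℓ⁻¹) ⬝ᵥ v := by rw [dotProduct_mulVec, vecMul_transpose]

theorem rank_of_gram : (X * diagonal ℓ⁻¹ * Xᵀ).rank = Fintype.card n := by
  have hG : IsUnit (Xᵀ * X) :=
    mulVec_injective_iff_isUnit.1 (mulVec_injective_transpose_mul_self_of_gram hℓ hX)
  have hD : IsUnit (diagonal ℓ⁻¹) := by
    rw [isUnit_diagonal, Pi.isUnit_iff]
    exact fun i => (inv_pos.2 (hℓ i)).ne'.isUnit
  have hsandwich : Xᵀ * (X * diagonal ℓ⁻¹ * Xᵀ) * X = (Xᵀ * X) * diagonal ℓ⁻¹ * (Xᵀ * X) := by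
    simp only [Matrix.mul_assoc]
  apply le_antisymm
  · exact (rank_mul_le_left _ _).trans ((rank_mul_le_left _ _).trans (rank_le_card_width X))
  · calc Fintype.card n = (Xᵀ * (X * diagonal ℓ⁻¹ * Xᵀ) * X).rank := by
          rw [hsandwich, rank_of_isUnit _ ((hG.mul hD).mul hG)]
      _ ≤ (X * diagonal ℓ⁻¹ * Xᵀ).rank :=
          (rank_mul_le_left _ _).trans (rank_mul_le_right _ _)

theorem eq_zero_or_eq_one_or_eq_of_gram {v : m → ℝ} {r : ℝ} (hv : v ≠ 0)
    (hAv : (X * diagonal ℓ⁻¹ * Xᵀ) *ᵥ v = r • v) :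
    r = 0 ∨ r = 1 ∨ r = 1 + ∑ i, (ℓ i)⁻¹ := by
  set w := X *ᵥ ℓ⁻¹
  set μ := 1 + ∑ i, (ℓ i)⁻¹
  have hAw : (X * diagonal ℓ⁻¹ * Xᵀ) *ᵥ w = μ • w := mulVec_weight_of_gram hℓ hX
  have hsq := mulVec_mulVec_self_of_gram hℓ hX v
  rw [hAv, mulVec_smul, hAv, smul_smul] at hsq
  have hvw : (r * r - r) • v = (w ⬝ᵥ v) • w := by rw [sub_smul, hsq, add_sub_cancel_left]
  have hAvw := congrArg ((X * diagonal ℓ⁻¹ * Xᵀ) *ᵥ ·) hvw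
  simp only [mulVec_smul, hAv, hAw] at hAvw
  rw [smul_comm _ μ, ← hvw, smul_smul, smul_smul, ← sub_eq_zero, ← sub_smul,
    smul_eq_zero] at hAvw
  have hpoly : r * (r - 1) * (r - μ) = 0 := by
    linear_combination hAvw.resolve_right hv
  rcases mul_eq_zero.1 hpoly with h | h
  · rcases mul_eq_zero.1 h with h | h
    · exact Or.inl h
    · exact Or.inr (Or.inl (sub_eq_zero.1 h))
  · exact Or.inr (Or.inr (sub_eq_zero.1 h))

variable [DecidableEq m]

theorem card_sub_one_le_rootMultiplicity_one_of_gram :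
    Fintype.card n - 1 ≤ (X * diagonal ℓ⁻¹ * Xᵀ).charpoly.rootMultiplicity 1 := by
  let σ : (n → ℝ) →ₗ[ℝ] ℝ := Fintype.linearCombination ℝ fun _ => 1
  have hker : Fintype.card n - 1 ≤ Module.finrank ℝ (LinearMap.ker σ) := by
    have hrank := σ.finrank_range_add_finrank_ker
    have hrange := Submodule.finrank_le (LinearMap.range σ)
    rw [Module.finrank_self] at hrange
    rw [Module.finrank_fintype_fun_eq_card] at hrank
    omega
  have hmap : (LinearMap.ker σ).map X.mulVecLin
      ≤ Module.End.eigenspace (toLin' (X * diagonal ℓ⁻¹ * Xᵀ)) 1 := by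
    rintro _ ⟨y, hy, rfl⟩
    have hsum : ∑ i, y i = 0 := by simpa [σ, Fintype.linearCombination_apply] using hy
    rw [Module.End.mem_eigenspace_iff, toLin'_apply, mulVecLin_apply,
      mulVec_mulVec_of_gram hℓ hX, hsum, zero_smul, add_zero, one_smul]
  calc Fintype.card n - 1 ≤ Module.finrank ℝ (LinearMap.ker σ) := hker
    _ = Module.finrank ℝ ((LinearMap.ker σ).map X.mulVecLin) :=
        (Submodule.equivMapOfInjective _ (mulVec_injective_of_gram hℓ hX) _).finrank_eq
    _ ≤ Module.finrank ℝ (Module.End.eigenspace (toLin' (X * diagonal ℓ⁻¹ * Xᵀ)) 1) :=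
        Submodule.finrank_mono hmap
    _ ≤ _ := by
        rw [← charpoly_toLin']
        exact LinearMap.finrank_eigenspace_le _ _

theorem spectrum_eq_of_gram [Nontrivial n] {c : m} (hc : ∀ i, X c i = 1) :
    spectrum ℝ (X * diagonal ℓ⁻¹ * Xᵀ) = {0, 1, 1 + ∑ i, (ℓ i)⁻¹} := by
  set w := X *ᵥ ℓ⁻¹
  set μ := 1 + ∑ i, (ℓ i)⁻¹
  have hXinj := mulVec_injective_of_gram hℓ hX
  have hAw : (X * diagonal ℓ⁻¹ * Xᵀ) *ᵥ w = μ • w := mulVec_weight_of_gram hℓ hX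
  ext r
  rw [mem_spectrum_iff_exists_mulVec_eq_smul]
  constructor
  · rintro ⟨v, hv, hAv⟩
    simpa using eq_zero_or_eq_one_or_eq_of_gram hℓ hX hv hAv
  · rintro (rfl | rfl | rfl)
    · have hwc : w c = μ - 1 := by simp [w, μ, mulVec, dotProduct, hc]
      refine ⟨μ • Pi.single c 1 - w, fun h => ?_, ?_⟩
      · simpa [hwc] using congrFun h c
      · rw [mulVec_sub, mulVec_smul, mul_diagonal_mul_transpose_mulVec_single hc, hAw,
          sub_self, zero_smul]
    · obtain ⟨i, j, hij⟩ := exists_pair_ne n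
      refine ⟨X *ᵥ (Pi.single i 1 - Pi.single j 1), fun h => ?_, ?_⟩
      · rw [← mulVec_zero X] at h
        simpa [hij] using congrFun (hXinj h) i
      · rw [mulVec_mulVec_of_gram hℓ hX, one_smul]
        simp [Finset.sum_sub_distrib]
    · refine ⟨w, fun h => ?_, hAw⟩
      rw [← mulVec_zero X] at h
      obtain ⟨i⟩ := ‹Nontrivial n›.to_nonempty
      simpa [(hℓ i).ne'] using congrFun (hXinj h) i

theorem ncard_spectrum_of_gram [Nontrivial n] {c : m} (hc : ∀ i, X c i = 1) :
    (spectrum ℝ (X * diagonal ℓ⁻¹ * Xᵀ)).ncard = 3 := by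
  have hpos : 0 < ∑ i, (ℓ i)⁻¹ := Finset.sum_pos (fun i _ => inv_pos.2 (hℓ i)) Finset.univ_nonempty
  exact Set.ncard_eq_three.2 ⟨0, 1, _, zero_ne_one, by linarith, by linarith,
    spectrum_eq_of_gram hℓ hX hc⟩

end GramFactorization

end Matrix

theorem natCast_sub_one_pos {k : ℕ} (hk : 2 ≤ k) : (0 : ℝ) < (k : ℝ) - 1 := by
  have : (2 : ℝ) ≤ k := by exact_mod_cast hk
  linarith

def cliqueIncidence {V : Type*} [DecidableEq V] (s : ℕ) (K : Fin s → Finset V) :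
    Matrix V (Fin s) ℝ :=
  of fun u i => if u ∈ K i then 1 else 0

section CliqueStar

variable {V : Type*} [DecidableEq V] {s : ℕ} {K : Fin s → Finset V}

theorem cliqueStarMatrix_eq_incidence :
    cliqueStarMatrix s K
      = cliqueIncidence s K * diagonal (fun i => ((K i).card : ℝ) - 1)⁻¹
          * (cliqueIncidence s K)ᵀ := by
  ext u v
  rw [mul_apply]
  simp only [mul_diagonal, cliqueStarMatrix, cliqueIncidence, transpose_apply, of_apply]
  refine Finset.sum_congr rfl fun i _ => ?_
  by_cases hu : u ∈ K i <;> by_cases hv : v ∈ K i <;> simp [hu, hv]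

theorem transpose_cliqueIncidence_mul_self [Fintype V] {c : V}
    (hinter : ∀ i j : Fin s, i ≠ j → K i ∩ K j = {c}) :
    (cliqueIncidence s K)ᵀ * cliqueIncidence s K
      = diagonal (fun i => ((K i).card : ℝ) - 1) + of fun _ _ => 1 := by
  ext i j
  simp only [mul_apply, cliqueIncidence, transpose_apply, of_apply, ← ite_and, mul_ite, mul_one,
    mul_zero, Finset.sum_boole]
  have hfilter : ({x | x ∈ K j ∧ x ∈ K i} : Finset V) = K i ∩ K j := by
    ext x
    simp [and_comm]
  rw [hfilter, Matrix.add_apply, of_apply, diagonal_apply]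
  split_ifs with hij
  · subst hij
    simp
  · simp [hinter i j hij]

theorem cliqueStarMatrix_inS (hcard : ∀ i, 2 ≤ (K i).card) :
    inS (cliqueUnionGraph s K) (cliqueStarMatrix s K) := by
  refine ⟨?_, fun u v huv => ?_⟩
  · ext u v
    simp only [transpose_apply, cliqueStarMatrix, and_comm]
  · have hnonneg : ∀ i ∈ Finset.univ,
        (0 : ℝ) ≤ if u ∈ K i ∧ v ∈ K i then (((K i).card : ℝ) - 1)⁻¹ else 0 := fun i _ => by
      split_ifs
      exacts [(inv_pos.2 (natCast_sub_one_pos (hcard i))).le, le_rfl]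
    simp only [cliqueStarMatrix, cliqueUnionGraph, Ne, Finset.sum_eq_zero_iff_of_nonneg hnonneg]
    simp [huv, (natCast_sub_one_pos (hcard _)).ne']

end CliqueStar

theorem stmt11_general {V : Type*} [Fintype V] [DecidableEq V] (s : ℕ) (hs : 2 ≤ s)
    (K : Fin s → Finset V) (c : V)
    (hcard : ∀ i, 2 ≤ (K i).card)
    (hc : ∀ i, c ∈ K i)
    (hinter : ∀ i j : Fin s, i ≠ j → K i ∩ K j = {c})
    (hq3 : 3 ≤ qGraph (cliqueUnionGraph s K)) :
    inS (cliqueUnionGraph s K) (cliqueStarMatrix s K) ∧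
      (cliqueStarMatrix s K).rank = s ∧
      s - 1 ≤ Polynomial.rootMultiplicity 1 (cliqueStarMatrix s K).charpoly ∧
      (spectrum ℝ (cliqueStarMatrix s K)).ncard = 3 ∧
      qGraph (cliqueUnionGraph s K) = 3 := by
  have : Nontrivial (Fin s) := Fin.nontrivial_iff_two_le.2 hs
  have hℓ : ∀ i, (0 : ℝ) < ((K i).card : ℝ) - 1 := fun i => natCast_sub_one_pos (hcard i)
  have hX := transpose_cliqueIncidence_mul_self hinter
  have hcX : ∀ i, cliqueIncidence s K c i = 1 := fun i => by simp [cliqueIncidence, hc i]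
  have hncard : (spectrum ℝ (cliqueStarMatrix s K)).ncard = 3 := by
    rw [cliqueStarMatrix_eq_incidence]
    exact ncard_spectrum_of_gram hℓ hX hcX
  refine ⟨cliqueStarMatrix_inS hcard, ?_, ?_, hncard, ?_⟩
  · rw [cliqueStarMatrix_eq_incidence, rank_of_gram hℓ hX, Fintype.card_fin]
  · simpa [cliqueStarMatrix_eq_incidence] using card_sub_one_le_rootMultiplicity_one_of_gram hℓ hX
  · exact le_antisymm (Nat.sInf_le ⟨_, cliqueStarMatrix_inS hcard, hncard⟩) hq3

theorem stmt11 {V : Type*} [Fintype V] [DecidableEq V] (s : ℕ) (hs : 2 ≤ s)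
    (K : Fin s → Finset V) (c : V)
    (hcard : ∀ i, 2 ≤ (K i).card)
    (hc : ∀ i, c ∈ K i)
    (hinter : ∀ i j : Fin s, i ≠ j → K i ∩ K j = {c})
    (hcover : ∀ x : V, ∃ i, x ∈ K i)
    (hq3 : 3 ≤ qGraph (cliqueUnionGraph s K)) :
    inS (cliqueUnionGraph s K) (cliqueStarMatrix s K) ∧
      (cliqueStarMatrix s K).rank = s ∧
      s - 1 ≤ Polynomial.rootMultiplicity 1 (cliqueStarMatrix s K).charpoly ∧
      (spectrum ℝ (cliqueStarMatrix s K)).ncard = 3 ∧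
      qGraph (cliqueUnionGraph s K) = 3 :=
  stmt11_general s hs K c hcard hc hinter hq3
end

section
/- Let G and G' be connected graphs with |V(G)|=n and |V(G')|=n−ℓ for some 1≤ℓ<n. Assuming that for connected graphs of equal order n the join admits a matrix with two eigenvalues each of multiplicity n, we have q(G∨G') ≤ 2+ℓ. -/
open Matrix Polynomial

/-- The join `G ∨ G'` of two graphs on disjoint vertex sets. -/
def joinGraph {V W : Type*} (G : SimpleGraph V) (G' : SimpleGraph W) :
    SimpleGraph (V ⊕ W) where
  Adj x y :=
    match x, y with
    | .inl a, .inl b => G.Adj a b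
    | .inr a, .inr b => G'.Adj a b
    | .inl _, .inr _ => True
    | .inr _, .inl _ => True
  symm := ⟨by rintro (a | a) (b | b) h <;> simp_all [SimpleGraph.adj_comm]⟩
  loopless := ⟨by rintro (a | a) h <;> simp_all⟩

/-!
Extend `G'` to a connected graph `H'` on `n` vertices by making the `ℓ` extra vertices adjacent
to everything. The Monfared–Shader matrix `M ∈ S(G ∨ H')` has eigenvalues `a < b`, each of
multiplicity `n`, so `M - a` and `M - b` have rank `n`. Deleting the `ℓ` extra vertices gives a
principal submatrix `B ∈ S(G ∨ G')` of order `2n - ℓ` for which `B - a` and `B - b` still have rank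
at most `n`. Thus `a` and `b` each have multiplicity at least `n - ℓ` in `B`, which leaves room for
at most `ℓ` further eigenvalues.
-/

theorem Set.ncard_range_add_card_le {ι α : Type*} [Fintype ι] [DecidableEq α] (f : ι → α)
    {a b : α} (hab : a ≠ b) :
    (Set.range f).ncard + Fintype.card ι
      ≤ Fintype.card {i // f i ≠ a} + Fintype.card {i // f i ≠ b} + 2 := by
  classical
  set s := Finset.univ.filter fun i => f i ≠ a
  set t := Finset.univ.filter fun i => f i ≠ b
  have hst : s ∪ t = Finset.univ := by
    ext i
    by_cases h : f i = a <;> simp_all [s, t]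
  have hrange : Finset.univ.image f ⊆ {a, b} ∪ (s ∩ t).image f := by
    intro x hx
    obtain ⟨i, -, rfl⟩ := Finset.mem_image.mp hx
    by_cases ha : f i = a
    · simp [ha]
    by_cases hb : f i = b
    · simp [hb]
    exact Finset.mem_union_right _ (Finset.mem_image_of_mem f (by simp [s, t, ha, hb]))
  have hcard := Finset.card_union_add_card_inter s t
  rw [hst, Finset.card_univ] at hcard
  rw [← Set.image_univ, ← Finset.coe_univ, ← Finset.coe_image, Set.ncard_coe_finset,
    Fintype.card_subtype, Fintype.card_subtype]
  calc (Finset.univ.image f).card + Fintype.card ι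
      ≤ ({a, b} ∪ (s ∩ t).image f).card + Fintype.card ι := by gcongr
    _ ≤ 2 + (s ∩ t).card + Fintype.card ι := by
        gcongr
        exact (Finset.card_union_le _ _).trans
          (add_le_add Finset.card_le_two Finset.card_image_le)
    _ = s.card + t.card + 2 := by omega

namespace Matrix.IsHermitian

variable {𝕜 ι : Type*} [RCLike 𝕜] [Fintype ι] [DecidableEq ι] {A : Matrix ι ι 𝕜}

theorem rank_sub_scalar (hA : A.IsHermitian) (μ : ℝ) :
    (A - scalar ι (μ : 𝕜)).rank = Fintype.card {i // hA.eigenvalues i ≠ μ} := by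
  set φ := Unitary.conjStarAlgAut 𝕜 _ hA.eigenvectorUnitary
  have hconj :
      A - scalar ι (μ : 𝕜) = φ (diagonal fun i => ((hA.eigenvalues i - μ : ℝ) : 𝕜)) := by
    have hμ : φ (scalar ι (μ : 𝕜)) = scalar ι (μ : 𝕜) := AlgHomClass.commutes φ (μ : 𝕜)
    conv_lhs => rw [hA.spectral_theorem, ← hμ, ← map_sub, scalar_apply, diagonal_sub]
    congr 2
    ext i
    simp
  rw [hconj, Unitary.conjStarAlgAut_apply, ← Unitary.coe_star]
  simp [-isUnit_iff_ne_zero, -Unitary.coe_star, rank_diagonal, sub_eq_zero]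

theorem card_eigenvalues_eq (hA : A.IsHermitian) (μ : ℝ) :
    Fintype.card {i // hA.eigenvalues i = μ} = A.charpoly.rootMultiplicity (μ : 𝕜) := by
  rw [← count_roots, hA.roots_charpoly_eq_eigenvalues, Multiset.count_map, Fintype.card_subtype]
  simp only [eq_comm, Function.comp_apply, algebraMap.coe_inj]
  rfl

theorem rank_sub_scalar_of_charpoly_eq (hA : A.IsHermitian) {m : ℕ} {a b : ℝ} (hab : a ≠ b)
    (hcp : A.charpoly = (X - C (a : 𝕜)) ^ m * (X - C (b : 𝕜)) ^ m) :
    (A - scalar ι (a : 𝕜)).rank = m := by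
  have hne : ((X - C (a : 𝕜)) ^ m * (X - C (b : 𝕜)) ^ m) ≠ 0 :=
    (((monic_X_sub_C _).pow m).mul ((monic_X_sub_C _).pow m)).ne_zero
  have hcard : Fintype.card ι = m + m := by
    rw [← A.charpoly_natDegree_eq_dim, hcp, natDegree_mul (pow_ne_zero _ (X_sub_C_ne_zero _))
      (pow_ne_zero _ (X_sub_C_ne_zero _))]
    simp only [natDegree_pow, natDegree_X_sub_C, mul_one]
  have hmult : Fintype.card {i // hA.eigenvalues i = a} = m := by
    rw [hA.card_eigenvalues_eq, ← count_roots, hcp, roots_mul hne, roots_pow, roots_pow,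
      roots_X_sub_C, roots_X_sub_C]
    simp [Multiset.count_nsmul, hab]
  have hcompl := Fintype.card_subtype_compl fun i => hA.eigenvalues i = a
  rw [hA.rank_sub_scalar]
  simp only [hmult, hcard] at hcompl
  convert hcompl using 1
  omega

theorem ncard_spectrum_add_card_le (hA : A.IsHermitian) {a b : ℝ} (hab : a ≠ b) :
    (spectrum ℝ A).ncard + Fintype.card ι
      ≤ (A - scalar ι (a : 𝕜)).rank + (A - scalar ι (b : 𝕜)).rank + 2 := by
  rw [hA.spectrum_real_eq_range_eigenvalues, hA.rank_sub_scalar, hA.rank_sub_scalar]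
  exact Set.ncard_range_add_card_le _ hab

end Matrix.IsHermitian

theorem Matrix.rank_submatrix_sub_scalar_le {R ι κ : Type*} [CommRing R] [StrongRankCondition R]
    [Fintype ι] [DecidableEq ι] [Fintype κ] [DecidableEq κ] (A : Matrix κ κ R) {f : ι → κ}
    (hf : Function.Injective f) (μ : R) :
    (A.submatrix f f - scalar ι μ).rank ≤ (A - scalar κ μ).rank := by
  have hscalar : scalar ι μ = (scalar κ μ).submatrix f f := by
    rw [scalar_apply, scalar_apply, submatrix_diagonal _ f hf]
    rfl
  rw [hscalar]
  exact rank_submatrix_le (A - scalar κ μ) f f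

theorem inS.isHermitian {V : Type*} {G : SimpleGraph V} {A : Matrix V V ℝ} (hA : inS G A) :
    A.IsHermitian := by
  rw [IsHermitian, conjTranspose_eq_transpose_of_trivial]
  exact hA.1

theorem inS.submatrix {V W : Type*} {G : SimpleGraph V} {A : Matrix V V ℝ} (hA : inS G A)
    {f : W → V} (hf : Function.Injective f) : inS (G.comap f) (A.submatrix f f) := by
  refine ⟨by rw [IsSymm, transpose_submatrix, hA.1], fun i j hij => ?_⟩
  exact hA.2 (f i) (f j) (hf.ne hij)

theorem qGraph_le_ncard_spectrum {V : Type*} [Fintype V] [DecidableEq V] {G : SimpleGraph V}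
    {A : Matrix V V ℝ} (hA : inS G A) : qGraph G ≤ (spectrum ℝ A).ncard :=
  Nat.sInf_le ⟨A, hA, rfl⟩

theorem joinGraph_comap_sumMap {V W V' W' : Type*} (G : SimpleGraph V) (H : SimpleGraph W)
    (f : V' → V) (g : W' → W) :
    (joinGraph G H).comap (Sum.map f g) = joinGraph (G.comap f) (H.comap g) := by
  ext (x | x) (y | y) <;> rfl

namespace SimpleGraph

/-- The graph on `V` that restricts to `G` on the image of `e` and is complete elsewhere. -/
def completeOutside {V W : Type*} (e : W ↪ V) (G : SimpleGraph W) : SimpleGraph V where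
  Adj u v := u ≠ v ∧ ∀ a b, e a = u → e b = v → G.Adj a b
  symm := ⟨fun _ _ ⟨hne, h⟩ => ⟨hne.symm, fun a b ha hb => (h b a hb ha).symm⟩⟩
  loopless := ⟨fun _ h => h.1 rfl⟩

variable {V W : Type*} (e : W ↪ V) (G : SimpleGraph W)

theorem comap_completeOutside : (completeOutside e G).comap e = G := by
  ext a b
  simp only [comap_adj, completeOutside]
  constructor
  · exact fun h => h.2 a b rfl rfl
  · intro h
    exact ⟨e.injective.ne h.ne, fun a' b' ha hb => e.injective ha ▸ e.injective hb ▸ h⟩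

theorem completeOutside_connected {v : V} (hv : ∀ a, e a ≠ v) :
    (completeOutside e G).Connected :=
  (connected_iff_exists_forall_reachable _).mpr ⟨v, fun w => by
    rcases eq_or_ne v w with rfl | hvw
    · rfl
    · exact Adj.reachable ⟨hvw, fun a _ ha _ => (hv a ha).elim⟩⟩

end SimpleGraph

open SimpleGraph in
theorem stmt12_general (n ℓ : ℕ) (h1 : 1 ≤ ℓ) (h2 : ℓ < n)
    (G : SimpleGraph (Fin n)) (G' : SimpleGraph (Fin (n - ℓ)))
    (hG : G.Connected)
    (hjoin : ∀ (m : ℕ) (H H' : SimpleGraph (Fin m)), H.Connected → H'.Connected →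
      ∃ (M : Matrix (Fin m ⊕ Fin m) (Fin m ⊕ Fin m) ℝ) (a b : ℝ),
        inS (joinGraph H H') M ∧ a < b ∧
        M.charpoly = (X - C a) ^ m * (X - C b) ^ m) :
    qGraph (joinGraph G G') ≤ 2 + ℓ := by
  let e : Fin (n - ℓ) ↪ Fin n := Fin.castLEEmb (Nat.sub_le n ℓ)
  have he : ∀ a, e a ≠ ⟨n - 1, by omega⟩ := fun a h => by
    have := Fin.ext_iff.mp h
    simp only [e, Fin.castLEEmb_apply, Fin.val_castLE] at this
    omega
  obtain ⟨M, a, b, hM, hab, hcp⟩ :=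
    hjoin n G (completeOutside e G') hG (completeOutside_connected e G' he)
  let inc : Fin n ⊕ Fin (n - ℓ) → Fin n ⊕ Fin n := Sum.map id e
  have hinc : Function.Injective inc := Function.injective_id.sumMap e.injective
  have hB : inS (joinGraph G G') (M.submatrix inc inc) := by
    simpa [inc, joinGraph_comap_sumMap, comap_completeOutside] using hM.submatrix hinc
  have hrank_a := (M.rank_submatrix_sub_scalar_le hinc a).trans_eq
    (hM.isHermitian.rank_sub_scalar_of_charpoly_eq hab.ne hcp)
  have hrank_b := (M.rank_submatrix_sub_scalar_le hinc b).trans_eq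
    (hM.isHermitian.rank_sub_scalar_of_charpoly_eq hab.ne' (hcp.trans (mul_comm _ _)))
  have hcount := hB.isHermitian.ncard_spectrum_add_card_le hab.ne
  simp only [Fintype.card_sum, Fintype.card_fin, RCLike.ofReal_real_eq_id, id]
    at hcount hrank_a hrank_b
  exact (qGraph_le_ncard_spectrum hB).trans (by omega)

theorem stmt12 (n ℓ : ℕ) (h1 : 1 ≤ ℓ) (h2 : ℓ < n)
    (G : SimpleGraph (Fin n)) (G' : SimpleGraph (Fin (n - ℓ)))
    (hG : G.Connected) (hG' : G'.Connected)
    (hjoin : ∀ (m : ℕ) (H H' : SimpleGraph (Fin m)), H.Connected → H'.Connected →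
      ∃ (M : Matrix (Fin m ⊕ Fin m) (Fin m ⊕ Fin m) ℝ) (a b : ℝ),
        inS (joinGraph H H') M ∧ a < b ∧
        M.charpoly = (X - C a) ^ m * (X - C b) ^ m) :
    qGraph (joinGraph G G') ≤ 2 + ℓ :=
  stmt12_general n ℓ h1 h2 G G' hG hjoin
end

section
/- There is no 6×6 real symmetric orthogonal matrix whose off-diagonal zero–nonzero pattern is that of the wheel W₆ on 6 vertices (a 5-cycle on vertices 1..5 plus a hub vertex 6 adjacent to all). Consequently q(W₆) ≥ 3. -/
open Matrix

/-- The wheel on 6 vertices: a 5-cycle on vertices 0,…,4 plus a hub 5 adjacent to all. -/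
def wheel6 : SimpleGraph (Fin 6) :=
  SimpleGraph.fromRel (fun i j => (i, j) ∈
    ([(0,1),(1,2),(2,3),(3,4),(4,0),(0,5),(1,5),(2,5),(3,5),(4,5)] : List (Fin 6 × Fin 6)))

/-!
If `M ∈ S(W₆)` is a symmetric involution, the entry of `M² = 1` at a pair `i, i + 2` of rim
vertices is zero, and only their common neighbours `i + 1` and the hub contribute to it:
`a i * a (i + 1) = -(b i * b (i + 2))` with `a i = M (i, i + 1)` and `b i = M (i, hub)`.
Multiplying these five relations around the odd cycle gives `(∏ a)² = -(∏ b)²`, which forces a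
zero hub entry. For `q(W₆) ≥ 3`: a symmetric matrix with at most two eigenvalues `l ≠ m` is sent
to a symmetric involution with the same off-diagonal pattern by the affine map `l ↦ 1, m ↦ -1`.
-/

theorem Fintype.sq_prod_add_sq_prod_eq_zero {G R : Type*} [AddCommGroup G] [Fintype G]
    [CommRing R] (hG : Odd (Fintype.card G)) {a b : G → R} {s t : G}
    (h : ∀ i, a i * a (i + s) + b i * b (i + t) = 0) :
    (∏ i, a i) ^ 2 + (∏ i, b i) ^ 2 = 0 := by
  have hprod : ∀ (f : G → R) (u : G), ∏ i, f i * f (i + u) = (∏ i, f i) ^ 2 := fun f u => by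
    rw [Finset.prod_mul_distrib,
      Fintype.prod_equiv (Equiv.addRight u) (fun i => f (i + u)) f fun _ => rfl, sq]
  have hrel : ∀ i, a i * a (i + s) = -(b i * b (i + t)) := fun i =>
    eq_neg_of_add_eq_zero_left (h i)
  rw [← hprod a s, ← hprod b t, Finset.prod_congr rfl fun i _ => hrel i, Finset.prod_neg,
    Finset.card_univ, hG.neg_one_pow, neg_one_mul, neg_add_cancel]

theorem Set.exists_ne_subset_pair_of_ncard_le_two {α : Type*} [Nontrivial α] {s : Set α}
    (hs : s.Finite) (h : s.ncard ≤ 2) : ∃ a b : α, a ≠ b ∧ s ⊆ {a, b} := by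
  obtain h0 | h1 | h2 : s.ncard = 0 ∨ s.ncard = 1 ∨ s.ncard = 2 := by omega
  · obtain ⟨a, b, hab⟩ := exists_pair_ne α
    exact ⟨a, b, hab, by simp [(Set.ncard_eq_zero hs).mp h0]⟩
  · obtain ⟨a, rfl⟩ := Set.ncard_eq_one.mp h1
    obtain ⟨b, hb⟩ := exists_ne a
    exact ⟨a, b, hb.symm, by simp⟩
  · obtain ⟨a, b, hab, rfl⟩ := Set.ncard_eq_two.mp h2
    exact ⟨a, b, hab, subset_rfl⟩

/-- The affine map `x ↦ (2 * x - (l + m)) / (l - m)` sends `l ↦ 1` and `m ↦ -1`. -/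
theorem Matrix.IsSymm.affine_mul_self_eq_one {n : Type*} [Fintype n] [DecidableEq n]
    {A : Matrix n n ℝ} (hA : A.IsSymm) {l m : ℝ} (hlm : l ≠ m) (hspec : spectrum ℝ A ⊆ {l, m}) :
    ((2 / (l - m)) • A + (-(l + m) / (l - m)) • 1) * ((2 / (l - m)) • A + (-(l + m) / (l - m)) • 1)
      = 1 := by
  have hsa : IsSelfAdjoint A := by
    simpa [IsSelfAdjoint, Matrix.star_eq_conjTranspose] using hA.eq
  have hcfc : (2 / (l - m)) • A + (-(l + m) / (l - m)) • 1
      = cfc (fun x => 2 / (l - m) * x + -(l + m) / (l - m)) A := by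
    rw [cfc_add .., cfc_const_mul_id .., cfc_const .., Algebra.algebraMap_eq_smul_one]
  rw [hcfc, ← cfc_mul .., ← cfc_one ℝ A]
  refine cfc_congr fun x hx => ?_
  have hne : l - m ≠ 0 := sub_ne_zero.mpr hlm
  rcases hspec hx with rfl | rfl <;>
  · simp only [Pi.one_apply]
    field_simp
    ring

section inS

variable {V : Type*} {G : SimpleGraph V} {M : Matrix V V ℝ}

theorem inS.apply_eq_zero (hM : inS G M) {i j : V} (hij : i ≠ j) (hadj : ¬ G.Adj i j) :
    M i j = 0 :=
  not_not.mp fun h => hadj ((hM.2 i j hij).1 h)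

theorem inS.apply_ne_zero (hM : inS G M) {i j : V} (hadj : G.Adj i j) : M i j ≠ 0 :=
  (hM.2 i j hadj.ne).2 hadj

theorem inS.mul_self_apply_of_not_adj [Fintype V] [DecidableRel G.Adj] (hM : inS G M)
    {i j : V} (hij : i ≠ j) (hadj : ¬ G.Adj i j) :
    (M * M) i j = ∑ k ∈ Finset.univ.filter (fun k => G.Adj i k ∧ G.Adj k j), M i k * M k j := by
  rw [Matrix.mul_apply, Finset.sum_filter]
  refine Finset.sum_congr rfl fun k _ => ?_
  split_ifs with hk
  · rfl
  by_cases hik : G.Adj i k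
  · have hkj : ¬ G.Adj k j := fun hkj => hk ⟨hik, hkj⟩
    by_cases hkj' : k = j
    · exact absurd (hkj' ▸ hik) hadj
    · rw [hM.apply_eq_zero hkj' hkj, mul_zero]
  · by_cases hik' : i = k
    · subst hik'
      rw [hM.apply_eq_zero hij hadj, mul_zero]
    · rw [hM.apply_eq_zero hik' hik, zero_mul]

theorem inS.exists_mul_self_eq_one [Fintype V] [DecidableEq V] (hM : inS G M)
    (h : (spectrum ℝ M).ncard ≤ 2) : ∃ N : Matrix V V ℝ, inS G N ∧ N * N = 1 := by
  obtain ⟨l, m, hlm, hspec⟩ := Set.exists_ne_subset_pair_of_ncard_le_two M.finite_spectrum h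
  refine ⟨_, ⟨?_, fun i j hij => ?_⟩, hM.1.affine_mul_self_eq_one hlm hspec⟩
  · simp [Matrix.IsSymm, Matrix.transpose_smul, hM.1.eq]
  · rw [← hM.2 i j hij]
    simp [Matrix.one_apply_ne hij, sub_ne_zero.mpr hlm]

theorem inS_adjMatrix [DecidableRel G.Adj] : inS G (G.adjMatrix ℝ) :=
  ⟨G.isSymm_adjMatrix, fun i j _ => by simp⟩

theorem three_le_qGraph [Fintype V] [DecidableEq V]
    (h : ¬ ∃ N : Matrix V V ℝ, inS G N ∧ N * N = 1) : 3 ≤ qGraph G := by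
  classical
  refine le_csInf ⟨_, G.adjMatrix ℝ, inS_adjMatrix, rfl⟩ ?_
  rintro k ⟨A, hA, rfl⟩
  by_contra! hk
  exact h (hA.exists_mul_self_eq_one (by omega))

end inS

instance : DecidableRel wheel6.Adj := by
  unfold wheel6
  infer_instance

/-- Indexing the rim by `Fin 5` makes `i + 1` the next vertex along the 5-cycle. -/
abbrev wheel6Rim (i : Fin 5) : Fin 6 := i.castSucc

theorem wheel6_adj_rim_hub (i : Fin 5) : wheel6.Adj (wheel6Rim i) 5 := by
  revert i; decide

theorem wheel6_rim_ne_hub (i : Fin 5) : wheel6Rim i ≠ 5 :=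
  (Fin.castSucc_lt_last i).ne

theorem wheel6_rim_ne (i : Fin 5) : wheel6Rim i ≠ wheel6Rim (i + 2) := by
  revert i; decide

theorem wheel6_not_adj_rim (i : Fin 5) : ¬ wheel6.Adj (wheel6Rim i) (wheel6Rim (i + 2)) := by
  revert i; decide

theorem wheel6_commonNeighbors_rim (i : Fin 5) :
    Finset.univ.filter (fun k => wheel6.Adj (wheel6Rim i) k ∧ wheel6.Adj k (wheel6Rim (i + 2)))
      = {wheel6Rim (i + 1), 5} := by
  revert i; decide

theorem not_exists_inS_wheel6_mul_self_eq_one :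
    ¬ ∃ M : Matrix (Fin 6) (Fin 6) ℝ, inS wheel6 M ∧ M * M = 1 := by
  rintro ⟨M, hM, hM2⟩
  have hrel (i : Fin 5) :
      M (wheel6Rim i) (wheel6Rim (i + 1)) * M (wheel6Rim (i + 1)) (wheel6Rim (i + 2))
        + M (wheel6Rim i) 5 * M (wheel6Rim (i + 2)) 5 = 0 := by
    have h := hM.mul_self_apply_of_not_adj (wheel6_rim_ne i) (wheel6_not_adj_rim i)
    rw [hM2, Matrix.one_apply_ne (wheel6_rim_ne i), wheel6_commonNeighbors_rim,
      Finset.sum_pair (wheel6_rim_ne_hub (i + 1)), hM.1.apply (wheel6Rim (i + 2)) 5] at h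
    exact h.symm
  have hsq := Fintype.sq_prod_add_sq_prod_eq_zero (by decide)
    (a := fun i => M (wheel6Rim i) (wheel6Rim (i + 1))) (b := fun i => M (wheel6Rim i) 5)
    (s := 1) (t := 2) fun i => by simpa [add_assoc, one_add_one_eq_two] using hrel i
  have hb : ∏ i : Fin 5, M (wheel6Rim i) 5 ≠ 0 :=
    Finset.prod_ne_zero_iff.mpr fun i _ => hM.apply_ne_zero (wheel6_adj_rim_hub i)
  rw [add_eq_zero_iff_of_nonneg (sq_nonneg _) (sq_nonneg _)] at hsq
  exact hb (pow_eq_zero_iff two_ne_zero |>.mp hsq.2)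

theorem stmt13 :
    (¬ ∃ M : Matrix (Fin 6) (Fin 6) ℝ, inS wheel6 M ∧ M * M = 1) ∧
      3 ≤ qGraph wheel6 :=
  ⟨not_exists_inS_wheel6_mul_self_eq_one, three_le_qGraph not_exists_inS_wheel6_mul_self_eq_one⟩
end

section
/- For s≥2, the Cartesian product P_s□P₂ satisfies q(P_s□P₂)=s: it is at least s because there is a unique shortest path of length s−1 between opposite corner vertices (and q ≥ d+1 for a unique shortest path of length d), and at most s because P_s□P₂ has a Hamilton cycle on 2s vertices and any graph of order m with a Hamilton cycle has q ≤ ⌈m/2⌉. -/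
open Matrix

/-! The potential `i - j` on the vertex `(i, j)` of `P_s □ P_2` changes by at most one along an
edge and differs by `s - 1` between the bottom corners `(0, 0)` and `(s - 1, 0)`. Hence these are
at distance `s - 1`, and a walk of that length raises the potential at every step; from a vertex
of the bottom row only the step to the right does so, which forces the walk. For the upper bound,
the cycle running along the bottom row and back along the top row is Hamiltonian. -/

namespace SimpleGraph

section Potential

variable {V : Type*} {G : SimpleGraph V} (g : V → ℤ)

theorem Walk.le_add_length (hg : ∀ a b, G.Adj a b → g b ≤ g a + 1) {u v : V} (p : G.Walk u v) :
    g v ≤ g u + p.length := by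
  induction p with
  | nil => simp
  | cons h _ ih =>
    have := hg _ _ h
    rw [Walk.length_cons]
    push_cast
    linarith

theorem dist_eq_length_of_le_add_length (hg : ∀ a b, G.Adj a b → g b ≤ g a + 1) {u v : V}
    (p : G.Walk u v) (hp : g u + p.length = g v) : G.dist u v = p.length := by
  obtain ⟨q, hq⟩ := Reachable.exists_walk_length_eq_dist ⟨p⟩
  have := q.le_add_length g hg
  refine le_antisymm (dist_le p) ?_
  omega

theorem Walk.eq_of_length_eq_of_climbing (hg : ∀ a b, G.Adj a b → g b ≤ g a + 1) (S : Set V)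
    (hS : ∀ u ∈ S, ∀ w, G.Adj u w → g w = g u + 1 → w ∈ S)
    (hS_unique : ∀ u ∈ S, ∀ w w', G.Adj u w → G.Adj u w' → g w = g u + 1 → g w' = g u + 1 →
      w = w')
    {u v : V} (hu : u ∈ S) (p q : G.Walk u v) (hp : g u + p.length = g v)
    (hq : q.length = p.length) : p = q := by
  induction p with
  | nil => cases q with
    | nil => rfl
    | cons => simp at hq
  | @cons u w v h p ih => cases q with
    | nil => simp at hq
    | @cons _ w' _ h' q =>
      simp only [Walk.length_cons, Nat.cast_add, Nat.cast_one] at hp hq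
      have hp_le := p.le_add_length g hg
      have hq_le := q.le_add_length g hg
      have hw := hg _ _ h
      have hw' := hg _ _ h'
      obtain rfl : w = w' := hS_unique u hu w w' h h' (by omega) (by omega)
      rw [ih (hS u hu w h (by omega)) q (by omega) (by omega)]

end Potential

theorem exists_isHamiltonianCycle_cycleGraph {n : ℕ} (hn : 3 ≤ n) :
    ∃ (u : Fin n) (p : (cycleGraph n).Walk u u), p.IsHamiltonianCycle := by
  obtain ⟨k, rfl⟩ : ∃ k, n = k + 3 := ⟨n - 3, by omega⟩
  exact ⟨0, cycleGraph.cycle k, Walk.isHamiltonianCycle_iff_isCycle_and_length_eq.mpr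
    ⟨cycleGraph.isCycle_cycle, by simp⟩⟩

theorem cycleGraph_adj_val {n : ℕ} {u v : Fin n} (h : (cycleGraph n).Adj u v) :
    u.val + 1 = v.val ∨ v.val + 1 = u.val ∨ (u.val = 0 ∧ v.val + 1 = n) ∨
      (v.val = 0 ∧ u.val + 1 = n) := by
  have hu := u.isLt
  rw [cycleGraph_adj'] at h
  rcases lt_trichotomy u v with huv | rfl | huv
  · rw [Fin.coe_sub_iff_lt.mpr huv, Fin.sub_val_of_le huv.le] at h
    rw [Fin.lt_def] at huv
    omega
  · rw [Fin.sub_val_of_le le_rfl] at h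
    omega
  · rw [Fin.coe_sub_iff_lt.mpr huv, Fin.sub_val_of_le huv.le] at h
    rw [Fin.lt_def] at huv
    omega

theorem pathGraph_exists_walk_length {n : ℕ} (h0 : 0 < n) (i : ℕ) (hi : i < n) :
    ∃ p : (pathGraph n).Walk ⟨0, h0⟩ ⟨i, hi⟩, p.length = i := by
  induction i with
  | zero => exact ⟨.nil, rfl⟩
  | succ i ih =>
    obtain ⟨p, hp⟩ := ih (by omega)
    have h : (pathGraph n).Adj ⟨i, by omega⟩ ⟨i + 1, hi⟩ := pathGraph_adj.mpr (Or.inl rfl)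
    exact ⟨p.concat h, by simp [hp]⟩

end SimpleGraph

open SimpleGraph

section Ladder

variable {s : ℕ}

def ladderCycleEnum (s : ℕ) (k : Fin (2 * s)) : Fin s × Fin 2 :=
  if h : k.val < s then (⟨k, h⟩, 0) else (⟨2 * s - 1 - k, by have := k.isLt; omega⟩, 1)

theorem ladderCycleEnum_bijective : (ladderCycleEnum s).Bijective := by
  refine (Fintype.bijective_iff_injective_and_card _).mpr ⟨fun a b hab => ?_, by simp [mul_comm]⟩
  have := a.isLt
  have := b.isLt
  unfold ladderCycleEnum at hab
  split_ifs at hab <;> simp only [Prod.ext_iff, Fin.ext_iff, Fin.val_zero, Fin.val_one] at hab <;>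
    omega

theorem ladderCycleEnum_adj {a b : Fin (2 * s)} (h : (cycleGraph (2 * s)).Adj a b) :
    (pathGraph s □ pathGraph 2).Adj (ladderCycleEnum s a) (ladderCycleEnum s b) := by
  have := cycleGraph_adj_val h
  have := a.isLt
  have := b.isLt
  unfold ladderCycleEnum
  split_ifs <;>
    simp only [boxProd_adj, pathGraph_adj, Fin.ext_iff, Fin.val_zero, Fin.val_one, true_or, or_true,
      true_and, and_true] <;>
    omega

theorem ladder_exists_isHamiltonianCycle (hs : 2 ≤ s) :
    ∃ (u : Fin s × Fin 2) (p : (pathGraph s □ pathGraph 2).Walk u u), p.IsHamiltonianCycle := by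
  obtain ⟨u, p, hp⟩ := exists_isHamiltonianCycle_cycleGraph (n := 2 * s) (by omega)
  let f : cycleGraph (2 * s) →g pathGraph s □ pathGraph 2 :=
    ⟨ladderCycleEnum s, ladderCycleEnum_adj⟩
  exact ⟨f u, p.map f, hp.map ladderCycleEnum_bijective⟩

def ladderPotential (x : Fin s × Fin 2) : ℤ := (x.1 : ℤ) - (x.2 : ℤ)

theorem ladderPotential_le_add_one {a b : Fin s × Fin 2} (h : (pathGraph s □ pathGraph 2).Adj a b) :
    ladderPotential b ≤ ladderPotential a + 1 := by
  have := a.2.isLt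
  have := b.2.isLt
  simp only [boxProd_adj, pathGraph_adj, Fin.ext_iff] at h
  simp only [ladderPotential]
  omega

theorem ladderPotential_climb_of_bottom {u w : Fin s × Fin 2} (hu : u.2 = 0)
    (h : (pathGraph s □ pathGraph 2).Adj u w)
    (hw : ladderPotential w = ladderPotential u + 1) : w.1.val = u.1.val + 1 ∧ w.2 = 0 := by
  have := w.2.isLt
  simp only [boxProd_adj, pathGraph_adj, Fin.ext_iff] at h hu ⊢
  simp only [ladderPotential] at hw
  omega

theorem ladder_exists_walk_bottom_corners (hs : 0 < s) :
    ∃ p : (pathGraph s □ pathGraph 2).Walk (⟨0, hs⟩, 0) (⟨s - 1, by omega⟩, 0),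
      p.length = s - 1 := by
  obtain ⟨p, hp⟩ := pathGraph_exists_walk_length hs (s - 1) (by omega)
  exact ⟨p.boxProdLeft (pathGraph 2) 0, (Walk.length_map _ _).trans hp⟩

theorem ladder_dist_bottom_corners (hs : 0 < s) :
    (pathGraph s □ pathGraph 2).dist (⟨0, hs⟩, 0) (⟨s - 1, by omega⟩, 0) = s - 1 := by
  obtain ⟨p, hp⟩ := ladder_exists_walk_bottom_corners hs
  rw [dist_eq_length_of_le_add_length ladderPotential (fun _ _ => ladderPotential_le_add_one) p
    (by simp [ladderPotential, hp]), hp]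

theorem ladder_existsUnique_path_bottom_corners (hs : 0 < s) :
    ∃! p : (pathGraph s □ pathGraph 2).Walk (⟨0, hs⟩, 0) (⟨s - 1, by omega⟩, 0),
      p.IsPath ∧ p.length = s - 1 := by
  obtain ⟨p, hp⟩ := ladder_exists_walk_bottom_corners hs
  have hclimb : ladderPotential ((⟨0, hs⟩ : Fin s), 0) + p.length =
      ladderPotential ((⟨s - 1, by omega⟩ : Fin s), 0) := by
    simp [ladderPotential, hp]
  refine ⟨p, ⟨p.isPath_of_length_eq_dist ?_, hp⟩, fun q hq => ?_⟩
  · rw [hp, ladder_dist_bottom_corners]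
  · refine (Walk.eq_of_length_eq_of_climbing ladderPotential
      (fun _ _ => ladderPotential_le_add_one) {x | x.2 = 0} ?_ ?_ rfl p q hclimb
      (hq.2.trans hp.symm)).symm
    · exact fun u hu w h hw => (ladderPotential_climb_of_bottom hu h hw).2
    · intro u hu w w' h h' hw hw'
      obtain ⟨h1, h2⟩ := ladderPotential_climb_of_bottom hu h hw
      obtain ⟨h1', h2'⟩ := ladderPotential_climb_of_bottom hu h' hw'
      exact Prod.ext (Fin.ext (h1.trans h1'.symm)) (h2.trans h2'.symm)

end Ladder

theorem stmt15 (s : ℕ) (hs : 2 ≤ s)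
    -- unique shortest path theorem, assumed as a hypothesis
    (huniq : ∀ (V : Type) [Fintype V] [DecidableEq V] (H : SimpleGraph V) (u v : V) (d : ℕ),
      H.dist u v = d → (∃! p : H.Walk u v, p.IsPath ∧ p.length = d) → d + 1 ≤ qGraph H)
    -- Hamilton cycle bound `q(H) ≤ ⌈|V|/2⌉`, assumed as a hypothesis
    (hham : ∀ (V : Type) [Fintype V] [DecidableEq V] (H : SimpleGraph V),
      (∃ (u : V) (p : H.Walk u u), p.IsHamiltonianCycle) →
        qGraph H ≤ (Fintype.card V + 1) / 2) :
    qGraph ((SimpleGraph.pathGraph s).boxProd (SimpleGraph.pathGraph 2)) = s := by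
  have hs0 : 0 < s := by omega
  have hlower := huniq _ _ _ _ _ (ladder_dist_bottom_corners hs0)
    (ladder_existsUnique_path_bottom_corners hs0)
  have hupper := hham _ _ (ladder_exists_isHamiltonianCycle hs)
  rw [Fintype.card_prod, Fintype.card_fin, Fintype.card_fin] at hupper
  omega
end
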